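/- arXiv:2010.10464 — 10 statements merged into one kernel-verified Lean document; each statement's English description precedes it below -/
import Mathlib

section
/- A matrix H over a finite field F_q with l rows and columns indexed by 𝓕 is a valid encoder for the (X,ε) cache update problem if and only if it is a valid encoder for the (X,ε) BNSI problem. -/
open Matrix Finset

/-- `H` is a valid encoder for the `(X, ε)` cache update problem: for every node `k`
there is a decoder `D_k` recovering `(w+e)|_{X_k}` from the codeword `H(w+e)` and the
side information `w|_{X_k}`, for all `w` and all updates `e` of Hamming weight at most `ε`. -/
def ValidEncoder {𝓕 𝓚 : Type} [Fintype 𝓕] (F : Type) [Field F] [Fintype F]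
    (X : 𝓚 → Finset 𝓕) (ε : ℕ) {l : ℕ} (H : Matrix (Fin l) 𝓕 F) : Prop :=
  ∀ k : 𝓚, ∃ D : (Fin l → F) → ({f // f ∈ X k} → F) → ({f // f ∈ X k} → F),
    ∀ w e : 𝓕 → F, {f | e f ≠ 0}.ncard ≤ ε →
      D (H.mulVec (w + e)) (fun f => w f.1) = fun f => (w + e) f.1

/-- The optimal codelength `ℓ*(X, ε)`: the least `l` for which some finite field `F`
admits a valid encoder `H ∈ F^{l×F}` for the `(X, ε)` cache update problem. -/
noncomputable def optLen {𝓕 𝓚 : Type} [Fintype 𝓕] (X : 𝓚 → Finset 𝓕) (ε : ℕ) : ℕ :=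
  sInf {l : ℕ | ∃ (F : Type) (inst1 : Field F) (inst2 : Fintype F)
    (H : Matrix (Fin l) 𝓕 F), @ValidEncoder 𝓕 𝓚 _ F inst1 inst2 X ε l H}

/-- `H` is a valid encoder for the `(X, ε)` BNSI problem: for every node `k` there is a
decoder recovering `x|_{X_k}` from the codeword `Hx` and the noisy side information
`x|_{X_k} + ξ`, for all `x` and all noise vectors `ξ` of Hamming weight at most `ε`. -/
def ValidBNSI {𝓕 𝓚 : Type} [Fintype 𝓕] (F : Type) [Field F] [Fintype F]
    (X : 𝓚 → Finset 𝓕) (ε : ℕ) {l : ℕ} (H : Matrix (Fin l) 𝓕 F) : Prop :=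
  ∀ k : 𝓚, ∃ D : (Fin l → F) → ({f // f ∈ X k} → F) → ({f // f ∈ X k} → F),
    ∀ (x : 𝓕 → F) (ξ : {f // f ∈ X k} → F), {f | ξ f ≠ 0}.ncard ≤ ε →
      D (H.mulVec x) (fun f => x f.1 + ξ f) = fun f => x f.1

/-! The two problems are the same under the change of variables `x = w + e`, `ξ = -e|_{X_k}`:
the decoder sees the same pair (codeword, side information) in both. Conversely a BNSI noise
vector `ξ` on `X_k` is the restriction of its extension by zero, an update of the same weight. -/

open Function

theorem Set.ncard_preimage_le_of_injective {α β : Type*} {f : α → β} (hf : f.Injective)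
    {t : Set β} (ht : t.Finite := by toFinite_tac) : (f ⁻¹' t).ncard ≤ t.ncard :=
  Set.ncard_le_ncard_of_injOn f (fun _ ha => ha) hf.injOn ht

section

variable {𝓕 𝓚 : Type} [Fintype 𝓕] {F : Type} [Field F] [Fintype F] {X : 𝓚 → Finset 𝓕}
  {ε l : ℕ} {H : Matrix (Fin l) 𝓕 F}

theorem ValidEncoder.validBNSI (h : ValidEncoder F X ε H) : ValidBNSI F X ε H := by
  intro k
  obtain ⟨D, hD⟩ := h k
  refine ⟨D, fun x ξ hξ => ?_⟩
  set ξ' : 𝓕 → F := extend Subtype.val ξ 0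
  have hweight : (support (-ξ')).ncard ≤ ε := by
    rwa [support_neg, support_extend_zero Subtype.val_injective,
      Set.ncard_image_of_injective _ Subtype.val_injective]
  have hside : (fun f : X k => (x + ξ') f.1) = fun f => x f.1 + ξ f := by
    funext f
    simp [ξ']
  have key := hD (x + ξ') (-ξ') hweight
  rwa [add_neg_cancel_right, hside] at key

theorem ValidBNSI.validEncoder (h : ValidBNSI F X ε H) : ValidEncoder F X ε H := by
  intro k
  obtain ⟨D, hD⟩ := h k
  refine ⟨D, fun w e he => ?_⟩
  have hweight : (support fun f : X k => -e f.1).ncard ≤ ε := by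
    rw [support_fun_neg]
    exact (Set.ncard_preimage_le_of_injective Subtype.val_injective).trans he
  simpa using hD (w + e) (fun f => -e f.1) hweight

end

theorem cache_update_iff_BNSI_general {𝓕 𝓚 : Type} [Fintype 𝓕] (F : Type) [Field F] [Fintype F]
    (X : 𝓚 → Finset 𝓕) (ε : ℕ) {l : ℕ} (H : Matrix (Fin l) 𝓕 F) :
    ValidEncoder F X ε H ↔ ValidBNSI F X ε H :=
  ⟨ValidEncoder.validBNSI, ValidBNSI.validEncoder⟩

/-- A matrix `H` over a finite field is a valid encoder for the
`(X, ε)` cache update problem iff it is a valid encoder for the `(X, ε)` BNSI problem. -/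
theorem cache_update_iff_BNSI {𝓕 𝓚 : Type} [Fintype 𝓕] (F : Type) [Field F] [Fintype F]
    (X : 𝓚 → Finset 𝓕) (ε : ℕ) (hε : 1 ≤ ε) {l : ℕ} (H : Matrix (Fin l) 𝓕 F) :
    ValidEncoder F X ε H ↔ ValidBNSI F X ε H :=
  cache_update_iff_BNSI_general F X ε H
end

section
/- A matrix H over a finite field F_q with l rows and columns indexed by 𝓕 is a valid encoder for the (X,ε) cache update problem if and only if for every k ∈ 𝓚 and every z ∈ F_q^𝓕 such that the restriction z|_{X_k} is nonzero and has Hamming weight at most 2ε, one has Hz ≠ 0; equivalently, no nonzero linear combination of at most 2ε columns of H indexed by elements of X_k lies in the span of the columns of H indexed by Y_k = 𝓕 \ X_k. -/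
open Matrix Finset

/-!
A decoder for node `k` exists iff the codeword and the side information determine the target,
i.e. iff no two admissible pairs `(w, e)`, `(w', e')` share `H(w + e)` and `w|_{X_k}` while
differing on `X_k`. The difference `z = (w + e) - (w' + e')` of such pairs lies in `ker H` and
agrees on `X_k` with `e - e'`, a difference of two `ε`-sparse vectors; conversely every vector
with at most `2ε` nonzero entries on `X_k` agrees there with such a difference.
-/

section

open Function Set

theorem exists_decoder_iff {α β γ δ ω : Type*} [Nonempty ω] (p : α → β → Prop)
    (c : α → β → γ) (s : α → β → δ) (out : α → β → ω) :
    (∃ D : γ → δ → ω, ∀ a b, p a b → D (c a b) (s a b) = out a b) ↔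
      ∀ a b a' b', p a b → p a' b' → c a b = c a' b' → s a b = s a' b' →
        out a b = out a' b' := by
  classical
  constructor
  · rintro ⟨D, hD⟩ a b a' b' hp hp' hc hs
    rw [← hD a b hp, ← hD a' b' hp', hc, hs]
  · intro h
    refine ⟨fun y t => if hy : ∃ a b, p a b ∧ c a b = y ∧ s a b = t
      then out hy.choose hy.choose_spec.choose else Classical.arbitrary ω, ?_⟩
    intro a b hp
    have hy : ∃ a' b', p a' b' ∧ c a' b' = c a b ∧ s a' b' = s a b := ⟨a, b, hp, rfl, rfl⟩
    obtain ⟨hp', hc, hs⟩ := hy.choose_spec.choose_spec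
    dsimp only
    rw [dif_pos hy]
    exact h _ _ a b hp' hp hc hs

theorem AddMonoidHom.domRestrict_determined_iff_ker {ι M N : Type*} [AddCommGroup M]
    [AddCommGroup N] (φ : (ι → M) →+ N) (s : Set ι) (E : Set (ι → M)) :
    (∀ w e w' e', e ∈ E → e' ∈ E → φ (w + e) = φ (w' + e') →
        s.domRestrict w = s.domRestrict w' →
          s.domRestrict (w + e) = s.domRestrict (w' + e')) ↔
      ∀ z, φ z = 0 → ∀ e ∈ E, ∀ e' ∈ E, EqOn z (e - e') s → EqOn z 0 s := by
  simp only [domRestrict_eq_domRestrict_iff]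
  constructor
  · intro h z hz e he e' he' hze i hi
    -- the pairs `(z - e, e)` and `(-e', e')` have codewords `φ z = 0 = φ 0`
    have := h (z - e) e (-e') e' he he' (by simp [hz]) (fun j hj => by simp [hze hj]) hi
    simpa using this
  · intro h w e w' e' he he' hφ hw i hi
    have := h (w + e - (w' + e')) (by rw [map_sub, hφ, sub_self]) e he e' he'
      (fun j hj => by simp [hw hj]) hi
    simpa [sub_eq_zero] using this

theorem exists_eqOn_sub_iff_ncard_le {ι M : Type*} [Finite ι] [AddCommGroup M]
    (s : Set ι) (x : ι → M) (a b : ℕ) :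
    (∃ e e' : ι → M, (support e).ncard ≤ a ∧ (support e').ncard ≤ b ∧
        EqOn x (e - e') s) ↔ (s ∩ support x).ncard ≤ a + b := by
  classical
  set T := s ∩ support x
  constructor
  · rintro ⟨e, e', he, he', hx⟩
    have hT : T ⊆ support e ∪ support e' := by
      rintro i ⟨hi, hxi⟩
      by_contra hne
      simp only [mem_union, mem_support, not_or, not_not] at hne
      exact hxi (by simp [hx hi, hne.1, hne.2])
    calc T.ncard ≤ (support e ∪ support e').ncard := ncard_le_ncard hT
      _ ≤ (support e).ncard + (support e').ncard := ncard_union_le _ _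
      _ ≤ a + b := add_le_add he he'
  · intro hT
    obtain ⟨T₁, hT₁, hcard⟩ := Set.exists_subset_card_eq (min_le_right a T.ncard)
    refine ⟨T₁.indicator x, -(T \ T₁).indicator x, ?_, ?_, ?_⟩
    · calc (support (T₁.indicator x)).ncard ≤ T₁.ncard :=
            ncard_le_ncard support_indicator_subset
        _ ≤ a := hcard.trans_le (min_le_left _ _)
    · rw [support_neg]
      calc (support ((T \ T₁).indicator x)).ncard ≤ (T \ T₁).ncard :=
            ncard_le_ncard support_indicator_subset
        _ = T.ncard - T₁.ncard := ncard_sdiff hT₁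
        _ ≤ b := by omega
    · intro i hi
      by_cases h₁ : i ∈ T₁
      · simp [h₁]
      · by_cases hxi : x i = 0
        · simp [indicator_apply, hxi]
        · have h₂ : i ∈ T \ T₁ := ⟨⟨hi, hxi⟩, h₁⟩
          simp [h₁, h₂]

end

theorem validEncoder_iff_criterion_general {𝓕 𝓚 : Type} [Fintype 𝓕] (F : Type) [Field F]
    [Fintype F] (X : 𝓚 → Finset 𝓕) (ε : ℕ) {l : ℕ}
    (H : Matrix (Fin l) 𝓕 F) :
    ValidEncoder F X ε H ↔
      ∀ k : 𝓚, ∀ z : 𝓕 → F,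
        (∃ f ∈ X k, z f ≠ 0) → {f | f ∈ X k ∧ z f ≠ 0}.ncard ≤ 2 * ε →
          H.mulVec z ≠ 0 := by
  refine forall_congr' fun k => ?_
  rw [exists_decoder_iff]
  refine (H.mulVecLin.toAddMonoidHom.domRestrict_determined_iff_ker (X k)
    {e | (Function.support e).ncard ≤ ε}).trans (forall_congr' fun z => ?_)
  have hsplit := exists_eqOn_sub_iff_ncard_le (X k : Set 𝓕) z ε ε
  rw [← two_mul] at hsplit
  constructor
  · rintro h ⟨f, hf, hzf⟩ hweight hz
    obtain ⟨e, e', he, he', hze⟩ := hsplit.2 hweight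
    exact hzf (h hz e he e' he' hze hf)
  · intro h hz e he e' he' hze f hf
    by_contra hzf
    exact h ⟨f, hf, hzf⟩ (hsplit.1 ⟨e, e', he, he', hze⟩) hz

/-- `H` is a valid encoder for the `(X, ε)` cache update problem iff for
every node `k` and every vector `z` whose restriction to `X k` is nonzero and has Hamming
weight at most `2ε`, one has `Hz ≠ 0`; i.e. no nonzero combination of at most `2ε` columns
of `H` indexed by `X k` lies in the span of the columns indexed by `Y k = 𝓕 \ X k`. -/
theorem validEncoder_iff_criterion {𝓕 𝓚 : Type} [Fintype 𝓕] (F : Type) [Field F]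
    [Fintype F] (X : 𝓚 → Finset 𝓕) (ε : ℕ) (hε : 1 ≤ ε) {l : ℕ}
    (H : Matrix (Fin l) 𝓕 F) :
    ValidEncoder F X ε H ↔
      ∀ k : 𝓚, ∀ z : 𝓕 → F,
        (∃ f ∈ X k, z f ≠ 0) → {f | f ∈ X k ∧ z f ≠ 0}.ncard ≤ 2 * ε →
          H.mulVec z ≠ 0 :=
  validEncoder_iff_criterion_general F X ε H
end

section
/- If H is a valid encoder over a finite field F_q for the (X,ε) cache update problem, then for every k ∈ 𝓚, every set of at most 2ε columns of H indexed by elements of X_k is linearly independent. -/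
open Matrix Finset

/-!
A kernel vector `c` of `H` with at most `2ε` nonzero entries splits as `c = a - (a - c)` with
`a` and `a - c` both of weight at most `ε`. They have the same image under `H`, so the decoder of
node `k`, given zero side information, returns the same values for both: `a` and `a - c` agree
on `X k`, i.e. `c` vanishes on `X k`. A linear dependency among columns indexed by `S ⊆ X k` is
such a kernel vector supported in `S`, hence trivial.
-/

theorem Finset.exists_subset_card_le_card_sdiff_le {α : Type*} [DecidableEq α] {s : Finset α}
    {m n : ℕ} (hs : s.card ≤ m + n) : ∃ A ⊆ s, A.card ≤ m ∧ (s \ A).card ≤ n := by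
  obtain ⟨A, hAs, hA⟩ := s.exists_subset_card_eq (min_le_right m s.card)
  refine ⟨A, hAs, hA.trans_le (min_le_left _ _), ?_⟩
  rw [card_sdiff_of_subset hAs, hA]
  omega

theorem Set.ncard_le_card_of_subset_finset {α : Type*} {s : Set α} {A : Finset α} (h : s ⊆ A) :
    s.ncard ≤ A.card :=
  (Set.ncard_le_ncard h A.finite_toSet).trans_eq (Set.ncard_coe_finset A)

theorem Matrix.mulVec_eq_sum_smul_col {m n R : Type*} [Fintype n] [CommSemiring R]
    (M : Matrix m n R) (v : n → R) : M *ᵥ v = ∑ j, v j • fun i => M i j := by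
  ext i
  simp [mulVec, dotProduct, Finset.sum_apply, mul_comm]

section

variable {𝓕 𝓚 : Type} [Fintype 𝓕] {F : Type} [Field F] [Fintype F] {X : 𝓚 → Finset 𝓕} {ε l : ℕ}
  {H : Matrix (Fin l) 𝓕 F}

theorem ValidEncoder.eqOn_of_mulVec_eq (hH : ValidEncoder F X ε H) (k : 𝓚) {e₁ e₂ : 𝓕 → F}
    (h₁ : (Function.support e₁).ncard ≤ ε) (h₂ : (Function.support e₂).ncard ≤ ε)
    (h : H *ᵥ e₁ = H *ᵥ e₂) : Set.EqOn e₁ e₂ (X k) := by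
  obtain ⟨D, hD⟩ := hH k
  intro f hf
  have h0 := (hD 0 e₁ h₁).symm.trans (by simpa only [zero_add, h] using hD 0 e₂ h₂)
  simpa using congrFun h0 ⟨f, hf⟩

theorem ValidEncoder.eqOn_zero_of_mulVec_eq_zero (hH : ValidEncoder F X ε H) (k : 𝓚)
    {c : 𝓕 → F} {T : Finset 𝓕} (hcT : Function.support c ⊆ T) (hT : T.card ≤ 2 * ε)
    (hc : H *ᵥ c = 0) : Set.EqOn c 0 (X k) := by
  classical
  obtain ⟨A, hAT, hA, hTA⟩ := T.exists_subset_card_le_card_sdiff_le (hT.trans (two_mul ε).le)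
  set a := (A : Set 𝓕).indicator c
  have ha : Function.support a ⊆ A := Set.support_indicator_subset
  have hac : Function.support (a - c) ⊆ ↑(T \ A) := by
    intro f hf
    by_cases hfA : f ∈ A
    · simp [a, hfA] at hf
    · have hcf : c f ≠ 0 := by simpa [a, hfA] using hf
      simpa [hfA] using hcT hcf
  have key : Set.EqOn a (a - c) (X k) :=
    hH.eqOn_of_mulVec_eq k ((Set.ncard_le_card_of_subset_finset ha).trans hA)
      ((Set.ncard_le_card_of_subset_finset hac).trans hTA) (by rw [mulVec_sub, hc, sub_zero])
  intro f hf
  exact sub_eq_self.mp (key hf).symm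

end

theorem validEncoder_columns_linearIndependent_general {𝓕 𝓚 : Type} [Fintype 𝓕] (F : Type)
    [Field F] [Fintype F] (X : 𝓚 → Finset 𝓕) (ε : ℕ) {l : ℕ}
    (H : Matrix (Fin l) 𝓕 F) (hH : ValidEncoder F X ε H) :
    ∀ k : 𝓚, ∀ S : Finset 𝓕, S ⊆ X k → S.card ≤ 2 * ε →
      LinearIndependent F (fun f : {x // x ∈ S} => fun i => H i f.1) := by
  intro k S hSX hS
  show LinearIndepOn F (fun f i => H i f) (S : Set 𝓕)
  refine linearIndepOn_iff''.2 fun t g htS hgt hsum => ?_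
  have hg : H *ᵥ g = 0 := by
    rw [mulVec_eq_sum_smul_col, ← hsum]
    exact (Finset.sum_subset (subset_univ t) fun f _ hf => by simp [hgt f hf]).symm
  have hgsupp : Function.support g ⊆ t := fun f hf => by_contra fun hft => hf (hgt f hft)
  intro f hf
  exact hH.eqOn_zero_of_mulVec_eq_zero k hgsupp ((card_le_card htS).trans hS) hg
    (hSX (htS hf))

/-- If `H` is a valid encoder for the `(X, ε)` cache update problem, then
for every node `k`, every set of at most `2ε` columns of `H` indexed by elements of `X k`
is linearly independent. -/
theorem validEncoder_columns_linearIndependent {𝓕 𝓚 : Type} [Fintype 𝓕] (F : Type)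
    [Field F] [Fintype F] (X : 𝓚 → Finset 𝓕) (ε : ℕ) (hε : 1 ≤ ε) {l : ℕ}
    (H : Matrix (Fin l) 𝓕 F) (hH : ValidEncoder F X ε H) :
    ∀ k : 𝓚, ∀ S : Finset 𝓕, S ⊆ X k → S.card ≤ 2 * ε →
      LinearIndependent F (fun f : {x // x ∈ S} => fun i => H i f.1) :=
  validEncoder_columns_linearIndependent_general F X ε H hH
end

section
/- Assume |X_k| = Z for every k ∈ 𝓚 and ε ≥ 1. Then the optimal codelength of the (X,ε) cache update problem satisfies ℓ*(X,ε) ≤ F − max(Z − 2ε, 0). -/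
open Matrix Finset

/-!
Let `d = Z - 2ε` and take a Reed–Solomon code `C` of dimension `d` over a prime field with at
least `F` elements, with a parity-check matrix `H` of `F - d` rows. A nonzero codeword of `C`
vanishes at fewer than `d` points, so it has more than `2ε` nonzero entries on every cache
`X k` of size `Z`. Hence the syndrome `H (w + e)` and the cached `w|_{X k}` determine
`(w + e)|_{X k}`.
-/

open Polynomial

theorem Finset.hammingNorm_restrict {ι K : Type*} [Zero K] [DecidableEq K] (s : Finset ι)
    (v : ι → K) : hammingNorm (s.restrict v) = #{i ∈ s | v i ≠ 0} := by
  rw [hammingNorm, ← card_map (Function.Embedding.subtype _)]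
  congr 1
  ext
  simp only [mem_map, mem_filter, mem_univ, true_and, Function.Embedding.subtype_apply]
  constructor
  · rintro ⟨i, hi, rfl⟩
    exact ⟨i.2, hi⟩
  · rintro ⟨hs, hv⟩
    exact ⟨⟨_, hs⟩, hv, rfl⟩

theorem Submodule.exists_matrix_mulVec_eq_zero_iff {K ι : Type*} [Field K] [Fintype ι]
    (C : Submodule K (ι → K)) {l : ℕ} (hl : Module.finrank K C + l = Fintype.card ι) :
    ∃ H : Matrix (Fin l) ι K, ∀ v, H *ᵥ v = 0 ↔ v ∈ C := by
  classical
  have hquot : Module.finrank K ((ι → K) ⧸ C) = Module.finrank K (Fin l → K) := by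
    have := C.finrank_quotient_add_finrank
    rw [Module.finrank_fin_fun, Module.finrank_fintype_fun_eq_card] at *
    omega
  let e := LinearEquiv.ofFinrankEq _ _ hquot
  refine ⟨LinearMap.toMatrix' (e.toLinearMap ∘ₗ C.mkQ), fun v => ?_⟩
  rw [LinearMap.toMatrix'_mulVec, LinearMap.comp_apply, LinearEquiv.coe_coe,
    LinearEquiv.map_eq_zero_iff, Submodule.mkQ_apply, Submodule.Quotient.mk_eq_zero]

section ReedSolomon

variable {K ι : Type*} [Field K]

noncomputable def reedSolomon (φ : ι → K) (d : ℕ) : Submodule K (ι → K) :=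
  LinearMap.range ((LinearMap.pi fun i => leval (φ i)) ∘ₗ (degreeLT K d).subtype)

theorem eq_zero_of_mem_degreeLT_of_eval_eq_zero {φ : ι → K} (hφ : Function.Injective φ)
    {d : ℕ} {p : K[X]} (hp : p ∈ degreeLT K d) (s : Finset ι) (hs : d ≤ #s)
    (hroots : ∀ i ∈ s, p.eval (φ i) = 0) : p = 0 := by
  classical
  by_contra hp0
  refine hp0 (eq_zero_of_natDegree_lt_card_of_eval_eq_zero' p (s.image φ) ?_ ?_)
  · simpa using hroots
  · rw [card_image_of_injective s hφ]
    exact ((natDegree_lt_iff_degree_lt hp0).2 (mem_degreeLT.1 hp)).trans_le hs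

theorem finrank_reedSolomon [Fintype ι] {φ : ι → K} (hφ : Function.Injective φ) {d : ℕ}
    (hd : d ≤ Fintype.card ι) : Module.finrank K (reedSolomon φ d) = d := by
  rw [reedSolomon, LinearMap.finrank_range_of_inj, (degreeLTEquiv K d).finrank_eq,
    Module.finrank_fin_fun]
  intro p q hpq
  rw [← sub_eq_zero] at hpq ⊢
  refine Subtype.ext (eq_zero_of_mem_degreeLT_of_eval_eq_zero hφ (p - q).2 univ hd
    fun i _ => ?_)
  simpa using congrFun hpq i

theorem eq_zero_of_mem_reedSolomon [DecidableEq K] {φ : ι → K} (hφ : Function.Injective φ)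
    {d : ℕ} {v : ι → K} (hv : v ∈ reedSolomon φ d) (s : Finset ι) (hs : d ≤ #{i ∈ s | v i = 0}) :
    v = 0 := by
  obtain ⟨⟨p, hp⟩, rfl⟩ := hv
  have : p = 0 := eq_zero_of_mem_degreeLT_of_eval_eq_zero hφ hp _ hs
    fun i hi => (mem_filter.1 hi).2
  subst this
  simp

end ReedSolomon

/-- Node `k` decodes by picking any vector with the received syndrome within Hamming distance
`ε` of its cache contents on `X k`; two such vectors differ by a kernel vector of weight at
most `2ε` on `X k`. -/
theorem validEncoder_of_mulVec_eq_zero {𝓕 𝓚 F : Type} [Fintype 𝓕] [Field F] [Fintype F]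
    [DecidableEq F] {X : 𝓚 → Finset 𝓕} {ε l : ℕ} (H : Matrix (Fin l) 𝓕 F)
    (hH : ∀ k v, H *ᵥ v = 0 → hammingNorm ((X k).restrict v) ≤ 2 * ε →
      (X k).restrict v = 0) :
    ValidEncoder F X ε H := by
  classical
  intro k
  let Candidate (y : Fin l → F) (s : X k → F) (u : 𝓕 → F) : Prop :=
    H *ᵥ u = y ∧ hammingDist ((X k).restrict u) s ≤ ε
  refine ⟨fun y s => if h : ∃ u, Candidate y s u then (X k).restrict h.choose else 0, ?_⟩
  intro w e he
  have hwe : hammingDist ((X k).restrict (w + e)) ((X k).restrict w) ≤ ε := by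
    calc hammingDist ((X k).restrict (w + e)) ((X k).restrict w)
        = #{f ∈ X k | e f ≠ 0} := by
          rw [hammingDist_comm, hammingDist_eq_hammingNorm, ← (X k).hammingNorm_restrict]
          congr 1
          ext f
          simp
      _ ≤ #{f | e f ≠ 0} := card_le_card (filter_subset_filter _ (subset_univ _))
      _ = {f | e f ≠ 0}.ncard := by rw [Set.ncard_eq_toFinset_card', Set.toFinset_ofPred]
      _ ≤ ε := he
  have hex : ∃ u, Candidate (H *ᵥ (w + e)) ((X k).restrict w) u := ⟨w + e, rfl, hwe⟩
  obtain ⟨hsyn, hdist⟩ := hex.choose_spec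
  refine (dif_pos hex).trans ?_
  rw [← sub_eq_zero]
  refine hH k (hex.choose - (w + e)) (by rw [Matrix.mulVec_sub, hsyn, sub_self]) ?_
  calc hammingNorm ((X k).restrict (hex.choose - (w + e)))
      = hammingDist ((X k).restrict (w + e)) ((X k).restrict hex.choose) := by
        rw [hammingDist_eq_hammingNorm, neg_add_eq_sub]
        rfl
    _ ≤ hammingDist ((X k).restrict (w + e)) ((X k).restrict w)
        + hammingDist ((X k).restrict w) ((X k).restrict hex.choose) := hammingDist_triangle ..
    _ ≤ 2 * ε := by rw [hammingDist_comm] at hdist; omega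

theorem optLen_le_MDS_bound_general {𝓕 𝓚 : Type} [Fintype 𝓕] (X : 𝓚 → Finset 𝓕) (ε Z : ℕ)
    (hZ : ∀ k, (X k).card = Z) :
    optLen X ε ≤ Fintype.card 𝓕 - (Z - 2 * ε) := by
  classical
  refine Nat.sInf_le ?_
  rcases isEmpty_or_nonempty 𝓚 with h𝓚 | ⟨⟨k₀⟩⟩
  · exact ⟨ZMod 2, inferInstance, inferInstance, 0, isEmptyElim⟩
  have hd : Z - 2 * ε ≤ Fintype.card 𝓕 := by
    rw [← hZ k₀]
    exact (Nat.sub_le _ _).trans (card_le_univ _)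
  obtain ⟨q, hq𝓕, hq⟩ := Nat.exists_infinite_primes (Fintype.card 𝓕)
  have : Fact q.Prime := ⟨hq⟩
  obtain ⟨φ⟩ : Nonempty (𝓕 ↪ ZMod q) :=
    Function.Embedding.nonempty_of_card_le (by rwa [ZMod.card])
  obtain ⟨H, hH⟩ := (reedSolomon φ (Z - 2 * ε)).exists_matrix_mulVec_eq_zero_iff
    (l := Fintype.card 𝓕 - (Z - 2 * ε)) (by rw [finrank_reedSolomon φ.injective hd]; omega)
  refine ⟨ZMod q, inferInstance, inferInstance, H,
    validEncoder_of_mulVec_eq_zero H fun k v hv hweight => ?_⟩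
  suffices v = 0 by rw [this]; rfl
  refine eq_zero_of_mem_reedSolomon φ.injective ((hH v).1 hv) (X k) ?_
  have hsplit := card_filter_add_card_filter_not (s := X k) (fun f => v f ≠ 0)
  rw [(X k).hammingNorm_restrict] at hweight
  simp only [not_not, hZ] at hsplit
  omega

/-- If `|X k| = Z` for every node `k` and `ε ≥ 1`, then the optimal
codelength satisfies `ℓ*(X, ε) ≤ F − max(Z − 2ε, 0)` (truncated subtraction in `ℕ`). -/
theorem optLen_le_MDS_bound {𝓕 𝓚 : Type} [Fintype 𝓕] (X : 𝓚 → Finset 𝓕) (ε Z : ℕ)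
    (hε : 1 ≤ ε) (hZ : ∀ k, (X k).card = Z) :
    optLen X ε ≤ Fintype.card 𝓕 - (Z - 2 * ε) :=
  optLen_le_MDS_bound_general X ε Z hZ
end

section
/- Assume |X_k| = Z for every k ∈ 𝓚 and ε ≥ 1, and let l = F − max(Z − 2ε, 0). If H is an l × F matrix over a finite field F_q (columns indexed by 𝓕) such that every set of l columns of H is linearly independent, then H is a valid encoder for the (X,ε) cache update problem. -/
open Matrix Finset

/-! Two admissible pairs `(w₁, e₁)`, `(w₂, e₂)` with `w₁ = w₂` on `X k` and the same codeword
differ by a kernel vector of `H` supported on the `F − Z` positions outside `X k` and the at most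
`2ε` positions of `X k` where `e₁` or `e₂` is nonzero: on at most `F − (Z − 2ε) = l` positions.
As any `l` columns of `H` are independent, that vector is zero, so the codeword and the cached
`w|_{X k}` determine `(w + e)|_{X k}`. -/

lemma ncard_setOf_ne_zero_eq_hammingNorm {ι β : Type*} [Fintype ι] [Zero β] [DecidableEq β]
    (v : ι → β) : {i | v i ≠ 0}.ncard = hammingNorm v := by
  rw [hammingNorm, ← Set.ncard_coe_finset]
  simp

lemma hammingDist_add_add_le_card_compl_add {ι β : Type*} [Fintype ι] [DecidableEq ι] [Add β]
    [IsLeftCancelAdd β] [DecidableEq β] {X : Finset ι} {w₁ w₂ e₁ e₂ : ι → β}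
    (hw : ∀ i ∈ X, w₁ i = w₂ i) :
    hammingDist (w₁ + e₁) (w₂ + e₂) ≤ #Xᶜ + hammingDist e₁ e₂ := by
  refine (card_le_card fun i hi => ?_).trans (card_union_le _ _)
  by_cases hiX : i ∈ X
  · simp_all
  · simp [hiX]

lemma hammingDist_le_hammingNorm_add {ι β : Type*} [Fintype ι] [Zero β] [DecidableEq β]
    (x y : ι → β) : hammingDist x y ≤ hammingNorm x + hammingNorm y := by
  simpa using hammingDist_triangle x 0 y

section MDS

variable {m ι F : Type*} [Fintype ι] [Field F] [DecidableEq F] {n : ℕ} {H : Matrix m ι F}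

lemma eq_of_mulVec_eq_of_hammingDist_le
    (hind : ∀ S : Finset ι, #S = n → LinearIndependent F (fun i : S => fun j => H j i.1))
    (hn : n ≤ Fintype.card ι) {u v : ι → F} (hd : hammingDist u v ≤ n)
    (hH : H *ᵥ u = H *ᵥ v) : u = v := by
  obtain ⟨S, hsupp, hS⟩ := exists_superset_card_eq hd hn
  have hindS : LinearIndepOn F Hᵀ (S : Set ι) := hind S hS
  have hsum : ∑ i ∈ S, (u - v) i • Hᵀ i = 0 := by
    rw [sum_subset (subset_univ S) fun i _ hi => ?_]
    · rw [← sub_eq_zero, ← mulVec_sub] at hH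
      simpa [mulVec_eq_sum, ← MulOpposite.op_sub, op_smul_eq_smul] using hH
    · have : u i = v i := by_contra fun h => hi (hsupp (by simpa using h))
      simp [this]
  funext i
  by_contra hi
  exact sub_ne_zero.2 hi (linearIndepOn_finset_iff.1 hindS _ hsum i (hsupp (by simpa using hi)))

lemma add_eq_add_of_mulVec_eq {ε Z : ℕ} {X : Finset ι} (hX : Z ≤ #X)
    (hind : ∀ S : Finset ι, #S = Fintype.card ι - (Z - 2 * ε) →
      LinearIndependent F (fun i : S => fun j => H j i.1))
    {w₁ w₂ e₁ e₂ : ι → F} (hw : ∀ i ∈ X, w₁ i = w₂ i)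
    (he₁ : hammingNorm e₁ ≤ ε) (he₂ : hammingNorm e₂ ≤ ε)
    (hH : H *ᵥ (w₁ + e₁) = H *ᵥ (w₂ + e₂)) : w₁ + e₁ = w₂ + e₂ := by
  classical
  refine eq_of_mulVec_eq_of_hammingDist_le hind (Nat.sub_le _ _) ?_ hH
  have hXc : #Xᶜ = Fintype.card ι - #X := card_compl X
  have hX' : #X ≤ Fintype.card ι := card_le_univ X
  have hsplit := hammingDist_add_add_le_card_compl_add (e₁ := e₁) (e₂ := e₂) hw
  have he := hammingDist_le_hammingNorm_add e₁ e₂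
  have hcard := hammingDist_le_card_fintype (x := w₁ + e₁) (y := w₂ + e₂)
  omega

end MDS

theorem mds_encoder_valid_general {𝓕 𝓚 : Type} [Fintype 𝓕] (F : Type) [Field F] [Fintype F]
    (X : 𝓚 → Finset 𝓕) (ε Z : ℕ) (hZ : ∀ k, (X k).card = Z)
    (H : Matrix (Fin (Fintype.card 𝓕 - (Z - 2 * ε))) 𝓕 F)
    (hind : ∀ S : Finset 𝓕, S.card = Fintype.card 𝓕 - (Z - 2 * ε) →
      LinearIndependent F (fun f : {x // x ∈ S} => fun i => H i f.1)) :
    ValidEncoder F X ε H := by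
  classical
  intro k
  let Update := {p : (𝓕 → F) × (𝓕 → F) // {f | p.2 f ≠ 0}.ncard ≤ ε}
  let received (p : Update) : (Fin _ → F) × ({f // f ∈ X k} → F) :=
    (H *ᵥ (p.1.1 + p.1.2), fun f => p.1.1 f)
  let updated (p : Update) : {f // f ∈ X k} → F := fun f => (p.1.1 + p.1.2) f
  have hfactors : updated.FactorsThrough received := by
    rintro ⟨⟨w₁, e₁⟩, he₁⟩ ⟨⟨w₂, e₂⟩, he₂⟩ hrec
    simp only [received, Prod.mk.injEq, funext_iff, Subtype.forall] at hrec
    rw [ncard_setOf_ne_zero_eq_hammingNorm] at he₁ he₂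
    simp only [updated, add_eq_add_of_mulVec_eq (hZ k).ge hind hrec.2 he₁ he₂ (funext hrec.1)]
  exact ⟨Function.curry (Function.extend received updated 0),
    fun w e he => hfactors.extend_apply 0 ⟨(w, e), he⟩⟩

/-- With `|X k| = Z` for all `k`, `ε ≥ 1` and `l = F − max(Z − 2ε, 0)`:
if `H` is an `l × F` matrix over a finite field such that every set of `l` columns of `H`
is linearly independent, then `H` is a valid encoder for the `(X, ε)` cache update
problem. -/
theorem mds_encoder_valid {𝓕 𝓚 : Type} [Fintype 𝓕] (F : Type) [Field F] [Fintype F]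
    (X : 𝓚 → Finset 𝓕) (ε Z : ℕ) (hε : 1 ≤ ε) (hZ : ∀ k, (X k).card = Z)
    (H : Matrix (Fin (Fintype.card 𝓕 - (Z - 2 * ε))) 𝓕 F)
    (hind : ∀ S : Finset 𝓕, S.card = Fintype.card 𝓕 - (Z - 2 * ε) →
      LinearIndependent F (fun f : {x // x ∈ S} => fun i => H i f.1)) :
    ValidEncoder F X ε H :=
  mds_encoder_valid_general F X ε Z hZ H hind
end

section
/- Suppose ε ≥ 1, every subfile index f ∈ 𝓕 is cached at exactly r nodes, where 1 ≤ r < K (i.e., |{k ∈ 𝓚 : f ∈ X_k}| = r for every f), and for any two distinct f₁, f₂ ∈ 𝓕 the node sets {k : f₁ ∈ X_k} and {k : f₂ ∈ X_k} are distinct. Then there exists B₀ such that for every B ≥ B₀ there exists a valid encoder for the (X,ε) cache update problem over the finite field with 2^B elements having exactly 2ε(K − r) + 1 rows. -/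
open Matrix Finset

namespace MvPolynomial

theorem totalDegree_det_le {σ R ι : Type*} [CommRing R] [Fintype ι] [DecidableEq ι]
    (M : Matrix ι ι (MvPolynomial σ R)) {d : ℕ} (hM : ∀ i j, (M i j).totalDegree ≤ d) :
    M.det.totalDegree ≤ Fintype.card ι * d := by
  rw [Matrix.det_apply]
  refine totalDegree_finsetSum_le fun τ _ => (totalDegree_smul_le _ _).trans ?_
  refine (totalDegree_finsetProd _ _).trans ?_
  simpa using Finset.sum_le_sum fun i (_ : i ∈ univ) => hM (τ i) i

theorem exists_eval_ne_zero_of_totalDegree_lt_card {σ F : Type*} [Finite σ] [Field F]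
    [Fintype F] {p : MvPolynomial σ F} (hp : p ≠ 0) (hdeg : p.totalDegree < Fintype.card F) :
    ∃ x, eval x p ≠ 0 := by
  by_contra! h
  exact hp <| eq_zero_of_eval_zero_at_prod_finset p (fun _ => univ)
    (fun i => (degreeOf_le_totalDegree p i).trans_lt hdeg) fun x _ => h x

end MvPolynomial

theorem ValidEncoder.of_forall_mulVec_eq_zero {𝓕 𝓚 F : Type} [Fintype 𝓕] [Field F]
    [Fintype F] {X : 𝓚 → Finset 𝓕} {ε l : ℕ} {H : Matrix (Fin l) 𝓕 F}
    (hH : ∀ (k : 𝓚) (u : 𝓕 → F) (T : Finset 𝓕), H *ᵥ u = 0 → #T ≤ 2 * ε →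
      (∀ f ∈ X k, u f ≠ 0 → f ∈ T) → ∀ f ∈ X k, u f = 0) :
    ValidEncoder F X ε H := by
  classical
  intro k
  refine ⟨fun y x => if h : ∃ z e : 𝓕 → F, H *ᵥ z = y ∧ {f | e f ≠ 0}.ncard ≤ ε ∧
      ∀ f : X k, z f = x f + e f then fun f => h.choose f else 0, fun w e he => ?_⟩
  have hex : ∃ z e' : 𝓕 → F, H *ᵥ z = H *ᵥ (w + e) ∧ {f | e' f ≠ 0}.ncard ≤ ε ∧
      ∀ f : X k, z f = w f + e' f := ⟨w + e, e, rfl, he, fun _ => rfl⟩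
  simp only [dif_pos hex]
  obtain ⟨e', hHz, he', hz⟩ := hex.choose_spec
  have hcard : ∀ g : 𝓕 → F, #(univ.filter fun f => g f ≠ 0) = {f | g f ≠ 0}.ncard := by
    intro g
    rw [Set.ncard_eq_toFinset_card', Set.toFinset_ofPred]
  have hdiff := hH k (hex.choose - (w + e))
    ((univ.filter fun f => e' f ≠ 0) ∪ univ.filter fun f => e f ≠ 0)
    (by rw [mulVec_sub, hHz, sub_self])
    ((card_union_le _ _).trans (by rw [hcard, hcard]; omega))
    (fun f hf hne => by
      rw [Pi.sub_apply, hz ⟨f, hf⟩, Pi.add_apply] at hne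
      simp only [mem_union, mem_filter, mem_univ, true_and]
      by_contra! h
      exact hne (by rw [h.1, h.2]; ring))
  funext f
  exact sub_eq_zero.mp (hdiff f f.2)

namespace CacheUpdate

open Polynomial

variable {𝓕 𝓚 : Type} [DecidableEq 𝓕] [Fintype 𝓚] (X : 𝓚 → Finset 𝓕)

def uncachedNodes (f : 𝓕) : Finset 𝓚 := univ.filter fun k => f ∉ X k

variable {X}

@[simp]
theorem mem_uncachedNodes {f : 𝓕} {k : 𝓚} : k ∈ uncachedNodes X f ↔ f ∉ X k := by
  simp [uncachedNodes]

theorem card_uncachedNodes {r : ℕ} (hreg : ∀ f : 𝓕, #(univ.filter fun k => f ∈ X k) = r)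
    (f : 𝓕) : #(uncachedNodes X f) = Fintype.card 𝓚 - r := by
  have hsplit := card_filter_add_card_filter_not (s := univ) fun k => f ∈ X k
  rw [hreg f, card_univ] at hsplit
  rw [uncachedNodes]
  omega

theorem eq_of_uncachedNodes_subset {r : ℕ}
    (hreg : ∀ f : 𝓕, #(univ.filter fun k => f ∈ X k) = r)
    (hdist : ∀ f₁ f₂ : 𝓕, f₁ ≠ f₂ →
      univ.filter (fun k => f₁ ∈ X k) ≠ univ.filter (fun k => f₂ ∈ X k))
    {f g : 𝓕} (h : uncachedNodes X f ⊆ uncachedNodes X g) : f = g := by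
  have heq : uncachedNodes X f = uncachedNodes X g :=
    eq_of_subset_of_card_le h (by rw [card_uncachedNodes hreg, card_uncachedNodes hreg])
  by_contra hfg
  refine hdist f g hfg (Finset.ext fun k => ?_)
  simpa using (Finset.ext_iff.mp heq k).not

variable {R : Type*} [CommRing R] {m : ℕ}

variable (X) in
noncomputable def encPoly (a : 𝓚 × Fin m → R) (f : 𝓕) : R[X] :=
  ∏ j ∈ uncachedNodes X f, ∏ s, (Polynomial.X - C (a (j, s)))

theorem eval_encPoly (a : 𝓚 × Fin m → R) (f : 𝓕) (x : R) :
    (encPoly X a f).eval x = ∏ j ∈ uncachedNodes X f, ∏ s, (x - a (j, s)) := by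
  simp [encPoly, eval_prod]

theorem natDegree_encPoly_le (a : 𝓚 × Fin m → R) (f : 𝓕) :
    (encPoly X a f).natDegree ≤ #(uncachedNodes X f) * m := by
  refine (natDegree_prod_le _ _).trans ?_
  rw [← smul_eq_mul, ← sum_const]
  refine sum_le_sum fun j _ => (natDegree_prod_le _ _).trans ?_
  simpa using sum_le_sum fun s (_ : s ∈ univ) => natDegree_X_sub_C_le (a (j, s))

theorem eval_encPoly_eq_zero (a : 𝓚 × Fin m → R) {f : 𝓕} {k : 𝓚} (hf : f ∉ X k)
    (s : Fin m) : (encPoly X a f).eval (a (k, s)) = 0 := by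
  rw [eval_encPoly]
  exact prod_eq_zero (mem_uncachedNodes.mpr hf) (prod_eq_zero (mem_univ s) (sub_self _))

variable (X) in
noncomputable def encoderMatrix (l : ℕ) (a : 𝓚 × Fin m → R) : Matrix (Fin l) 𝓕 R :=
  of fun s f => (encPoly X a f).coeff s

variable (X) in
noncomputable def evalMinor (a : 𝓚 × Fin m → R) (k : 𝓚) {n : ℕ} (hn : n ≤ m)
    (fv : Fin n → 𝓕) : Matrix (Fin n) (Fin n) R :=
  of fun i s => (encPoly X a (fv i)).eval (a (k, Fin.castLE hn s))

theorem map_evalMinor {S : Type*} [CommRing S] (φ : R →+* S) (a : 𝓚 × Fin m → R) (k : 𝓚)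
    {n : ℕ} (hn : n ≤ m) (fv : Fin n → 𝓕) :
    (evalMinor X a k hn fv).map φ = evalMinor X (φ ∘ a) k hn fv := by
  ext i s
  simp [evalMinor, eval_encPoly, map_prod]

theorem eval_det_evalMinor_X (b : 𝓚 × Fin m → R) (k : 𝓚) {n : ℕ} (hn : n ≤ m)
    (fv : Fin n → 𝓕) :
    MvPolynomial.eval b (evalMinor X MvPolynomial.X k hn fv).det = (evalMinor X b k hn fv).det := by
  rw [RingHom.map_det, RingHom.mapMatrix_apply, map_evalMinor,
    show ⇑(MvPolynomial.eval b) ∘ MvPolynomial.X = b by ext; simp]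

theorem totalDegree_det_evalMinor_X_le [Nontrivial R] (k : 𝓚) {n : ℕ} (hn : n ≤ m)
    (fv : Fin n → 𝓕) :
    (evalMinor X (MvPolynomial.X : _ → MvPolynomial (𝓚 × Fin m) R) k hn fv).det.totalDegree ≤
      n * (Fintype.card 𝓚 * m) := by
  refine (MvPolynomial.totalDegree_det_le _ fun i s => ?_).trans_eq (by rw [Fintype.card_fin])
  rw [evalMinor, of_apply, eval_encPoly]
  refine (MvPolynomial.totalDegree_finsetProd _ _).trans ?_
  calc _ ≤ ∑ _j ∈ uncachedNodes X (fv i), m := sum_le_sum fun j _ => by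
        refine (MvPolynomial.totalDegree_finsetProd _ _).trans ?_
        simpa using sum_le_sum fun t (_ : t ∈ univ) => (MvPolynomial.totalDegree_sub _ _).trans
          (max_le (MvPolynomial.totalDegree_X (R := R) (k, Fin.castLE hn s)).le
            (MvPolynomial.totalDegree_X (R := R) (j, t)).le)
    _ ≤ Fintype.card 𝓚 * m := by
        rw [sum_const, smul_eq_mul]
        exact Nat.mul_le_mul_right _ (card_le_univ _)

variable (X) in
def IsGoodPoint (a : 𝓚 × Fin m → R) : Prop :=
  ∀ (k : 𝓚) (n : ℕ) (hn : n ≤ m) (fv : Fin n → 𝓕), Function.Injective fv →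
    (∀ i, fv i ∈ X k) → (evalMinor X a k hn fv).det ≠ 0

section Decoding

variable [Fintype 𝓕] {F : Type} [Field F]

theorem sum_smul_encPoly_eq_zero {l : ℕ} {a : 𝓚 × Fin m → R}
    (hl : ∀ f, #(uncachedNodes X f) * m < l) {u : 𝓕 → R} (hu : encoderMatrix X l a *ᵥ u = 0) :
    ∑ f, u f • encPoly X a f = 0 := by
  ext d
  simp only [finsetSum_coeff, coeff_smul, smul_eq_mul, coeff_zero]
  by_cases hd : d < l
  · simpa [mulVec, dotProduct, encoderMatrix, mul_comm] using congrFun hu ⟨d, hd⟩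
  · refine sum_eq_zero fun f _ => ?_
    rw [coeff_eq_zero_of_natDegree_lt ((natDegree_encPoly_le a f).trans_lt
      ((hl f).trans_le (not_lt.mp hd))), mul_zero]

theorem eq_zero_of_sum_smul_encPoly_eq_zero {a : 𝓚 × Fin m → F} (ha : IsGoodPoint X a)
    {u : 𝓕 → F} (hu : ∑ f, u f • encPoly X a f = 0) {k : 𝓚} {T : Finset 𝓕} (hT : #T ≤ m)
    (hsupp : ∀ f ∈ X k, u f ≠ 0 → f ∈ T) : ∀ f ∈ X k, u f = 0 := by
  classical
  set S := (X k).filter fun f => u f ≠ 0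
  have hS : #S ≤ m := (card_le_card fun f hf => hsupp f (mem_filter.mp hf).1
    (mem_filter.mp hf).2).trans hT
  set fv : Fin #S → 𝓕 := fun i => S.equivFin.symm i
  have hfv : Function.Injective fv := Subtype.val_injective.comp S.equivFin.symm.injective
  have hfvk : ∀ i, fv i ∈ X k := fun i => (mem_filter.mp (S.equivFin.symm i).2).1
  have hvec : vecMul (fun i => u (fv i)) (evalMinor X a k hS fv) = 0 := by
    funext s
    have h0 := congrArg (eval (a (k, Fin.castLE hS s))) hu
    simp only [eval_finsetSum, eval_smul, smul_eq_mul, eval_zero] at h0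
    rw [← sum_subset (subset_univ S) fun f _ hfS => ?_, ← sum_coe_sort S,
      ← S.equivFin.symm.sum_comp] at h0
    · simpa [vecMul, dotProduct, evalMinor] using h0
    · by_cases hf : f ∈ X k
      · rw [show u f = 0 by simpa [S, hf] using hfS, zero_mul]
      · rw [eval_encPoly_eq_zero a hf, mul_zero]
  have hzero := eq_zero_of_vecMul_eq_zero (ha k _ hS fv hfv hfvk) hvec
  intro f hf
  by_contra hne
  have hfS : f ∈ S := mem_filter.mpr ⟨hf, hne⟩
  exact hne (by simpa [fv] using congrFun hzero (S.equivFin ⟨f, hfS⟩))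

theorem validEncoder_encoderMatrix [Fintype F] {ε l : ℕ} {a : 𝓚 × Fin (2 * ε) → F}
    (ha : IsGoodPoint X a) (hl : ∀ f, #(uncachedNodes X f) * (2 * ε) < l) :
    ValidEncoder F X ε (encoderMatrix X l a) :=
  .of_forall_mulVec_eq_zero fun _ _ _ hu hT hsupp =>
    eq_zero_of_sum_smul_encPoly_eq_zero ha (sum_smul_encPoly_eq_zero hl hu) hT hsupp

end Decoding

theorem exists_det_evalMinor_ne_zero {F : Type} [Field F] [Fintype F] (hF : m < Fintype.card F)
    (hanti : ∀ f g : 𝓕, uncachedNodes X f ⊆ uncachedNodes X g → f = g) {k : 𝓚} {n : ℕ}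
    (hn : n ≤ m) {fv : Fin n → 𝓕} (hfv : Function.Injective fv) (hfvk : ∀ i, fv i ∈ X k) :
    ∃ b : 𝓚 × Fin m → F, (evalMinor X b k hn fv).det ≠ 0 := by
  classical
  obtain ⟨ι⟩ := Function.Embedding.nonempty_of_card_le (α := Fin (m + 1)) (β := F)
    (by simpa using hF)
  -- `x (castLE s)` is a root of the factor of node `j` exactly when `j` caches `fv s`; as the
  -- sets `uncachedNodes X (fv i)` form an antichain, this makes the minor diagonal.
  set x : Fin m → F := fun t => ι t.castSucc
  set y : F := ι (Fin.last m)
  set b : 𝓚 × Fin m → F := fun jt =>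
    if ∃ s : Fin n, Fin.castLE hn s = jt.2 ∧ jt.1 ∈ uncachedNodes X (fv s) then y else x jt.2
  have hb : ∀ (j : 𝓚) (t : Fin m) (s : Fin n),
      x (Fin.castLE hn s) = b (j, t) ↔ t = Fin.castLE hn s ∧ j ∉ uncachedNodes X (fv s) := by
    intro j t s
    have hxy : ∀ t, x t ≠ y := fun t h => Fin.castSucc_ne_last t (ι.injective h)
    have hx : Function.Injective x := fun t t' h => Fin.castSucc_injective _ (ι.injective h)
    by_cases hc : ∃ s' : Fin n, Fin.castLE hn s' = t ∧ j ∈ uncachedNodes X (fv s')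
    · obtain ⟨s', rfl, hs'⟩ := hc
      rw [show b (j, Fin.castLE hn s') = y from if_pos ⟨s', rfl, hs'⟩, Fin.castLE_inj]
      exact ⟨fun h => absurd h (hxy _), fun ⟨hss', hj⟩ => absurd (hss' ▸ hs') hj⟩
    · rw [show b (j, t) = x t from if_neg hc, hx.eq_iff]
      exact ⟨fun h => ⟨h.symm, fun hj => hc ⟨s, h, hj⟩⟩, fun h => h.1.symm⟩
  have hbk : ∀ s, b (k, Fin.castLE hn s) = x (Fin.castLE hn s) := fun s =>
    if_neg fun ⟨s', hs', hks'⟩ => by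
      rw [Fin.castLE_inj] at hs'
      exact mem_uncachedNodes.mp (hs' ▸ hks') (hfvk s)
  have hentry : ∀ i s, evalMinor X b k hn fv i s = 0 ↔
      ¬uncachedNodes X (fv i) ⊆ uncachedNodes X (fv s) := by
    intro i s
    simp only [evalMinor, of_apply, eval_encPoly, hbk, prod_eq_zero_iff, sub_eq_zero, hb,
      mem_univ, true_and, exists_eq_left, not_subset]
  refine ⟨b, ?_⟩
  have hdiag : evalMinor X b k hn fv = diagonal fun i => evalMinor X b k hn fv i i := by
    ext i s
    rw [diagonal_apply]
    split_ifs with his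
    · rw [his]
    · exact (hentry i s).mpr fun hsub => his (hfv (hanti _ _ hsub))
  rw [hdiag, det_diagonal]
  exact prod_ne_zero_iff.mpr fun i _ h => (hentry i i).mp h subset_rfl

variable [Fintype 𝓕] in
theorem exists_isGoodPoint (hanti : ∀ f g : 𝓕, uncachedNodes X f ⊆ uncachedNodes X g → f = g)
    (m : ℕ) : ∃ N : ℕ, ∀ (F : Type) [Field F] [Fintype F], N < Fintype.card F →
      ∃ a : 𝓚 × Fin m → F, IsGoodPoint X a := by
  classical
  set Idx := 𝓚 × Σ n : Fin (m + 1), (Fin n → 𝓕)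
  refine ⟨Fintype.card Idx * (m * (Fintype.card 𝓚 * m)) + m, fun F _ _ hF => ?_⟩
  set minors := univ.filter fun idx : Idx =>
    Function.Injective idx.2.2 ∧ ∀ i, idx.2.2 i ∈ X idx.1
  set P : MvPolynomial (𝓚 × Fin m) F := ∏ idx ∈ minors,
    (evalMinor X MvPolynomial.X idx.1 (Nat.lt_succ_iff.mp idx.2.1.isLt) idx.2.2).det
  have hP : P ≠ 0 := prod_ne_zero_iff.mpr fun idx hidx h => by
    obtain ⟨b, hb⟩ := exists_det_evalMinor_ne_zero (F := F) (m := m) (by omega) hanti _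
      (mem_filter.mp hidx).2.1 (mem_filter.mp hidx).2.2
    exact hb (by rw [← eval_det_evalMinor_X, h, map_zero])
  have hdeg : P.totalDegree ≤ Fintype.card Idx * (m * (Fintype.card 𝓚 * m)) := by
    refine (MvPolynomial.totalDegree_finsetProd _ _).trans ?_
    refine (sum_le_card_nsmul _ _ _ fun idx _ => (totalDegree_det_evalMinor_X_le _ _ _).trans
      (Nat.mul_le_mul_right _ (Nat.lt_succ_iff.mp idx.2.1.isLt))).trans ?_
    rw [smul_eq_mul]
    exact Nat.mul_le_mul_right _ (card_le_univ _)
  obtain ⟨a, ha⟩ := MvPolynomial.exists_eval_ne_zero_of_totalDegree_lt_card hP (by omega)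
  refine ⟨a, fun k n hn fv hfv hfvk => ?_⟩
  rw [map_prod, prod_ne_zero_iff] at ha
  simpa [eval_det_evalMinor_X] using
    ha (k, ⟨⟨n, Nat.lt_succ_of_le hn⟩, fv⟩) (mem_filter.mpr ⟨mem_univ _, hfv, hfvk⟩)

end CacheUpdate

theorem exists_encoder_two_eps_K_minus_r_general {𝓕 𝓚 : Type} [Fintype 𝓕] [DecidableEq 𝓕]
    [Fintype 𝓚] (X : 𝓚 → Finset 𝓕) (ε : ℕ) (r : ℕ)
    (hreg : ∀ f : 𝓕, (Finset.univ.filter (fun k => f ∈ X k)).card = r)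
    (hdist : ∀ f₁ f₂ : 𝓕, f₁ ≠ f₂ →
      Finset.univ.filter (fun k => f₁ ∈ X k) ≠ Finset.univ.filter (fun k => f₂ ∈ X k)) :
    ∃ B₀ : ℕ, ∀ B : ℕ, B₀ ≤ B →
      ∃ H : Matrix (Fin (2 * ε * (Fintype.card 𝓚 - r) + 1)) 𝓕 (GaloisField 2 B),
        @ValidEncoder 𝓕 𝓚 _ (GaloisField 2 B) _ (Fintype.ofFinite _) X ε _ H := by
  obtain ⟨N, hN⟩ := CacheUpdate.exists_isGoodPoint
    (fun _ _ => CacheUpdate.eq_of_uncachedNodes_subset hreg hdist) (2 * ε)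
  refine ⟨N + 1, fun B hB => ?_⟩
  let := Fintype.ofFinite (GaloisField 2 B)
  have hcard : N < Fintype.card (GaloisField 2 B) := by
    rw [Fintype.card_eq_nat_card, GaloisField.card 2 B (by omega)]
    exact Nat.lt_two_pow_self.trans_le (Nat.pow_le_pow_right two_pos (by omega))
  obtain ⟨a, ha⟩ := hN _ hcard
  refine ⟨CacheUpdate.encoderMatrix X _ a, CacheUpdate.validEncoder_encoderMatrix ha fun f => ?_⟩
  rw [CacheUpdate.card_uncachedNodes hreg, mul_comm]
  exact Nat.lt_succ_self _

/-- Suppose `ε ≥ 1`, every subfile is cached at exactly `r` nodes with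
`1 ≤ r < K`, and distinct subfiles are cached at distinct sets of nodes. Then there is a
`B₀` such that for every `B ≥ B₀` there is a valid encoder over the field with `2^B`
elements having exactly `2ε(K − r) + 1` rows. -/
theorem exists_encoder_two_eps_K_minus_r {𝓕 𝓚 : Type} [Fintype 𝓕] [DecidableEq 𝓕]
    [Fintype 𝓚] [DecidableEq 𝓚] (X : 𝓚 → Finset 𝓕) (ε : ℕ) (hε : 1 ≤ ε) (r : ℕ)
    (hr1 : 1 ≤ r) (hrK : r < Fintype.card 𝓚)
    (hreg : ∀ f : 𝓕, (Finset.univ.filter (fun k => f ∈ X k)).card = r)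
    (hdist : ∀ f₁ f₂ : 𝓕, f₁ ≠ f₂ →
      Finset.univ.filter (fun k => f₁ ∈ X k) ≠ Finset.univ.filter (fun k => f₂ ∈ X k)) :
    ∃ B₀ : ℕ, ∀ B : ℕ, B₀ ≤ B →
      ∃ H : Matrix (Fin (2 * ε * (Fintype.card 𝓚 - r) + 1)) 𝓕 (GaloisField 2 B),
        @ValidEncoder 𝓕 𝓚 _ (GaloisField 2 B) _ (Fintype.ofFinite _) X ε _ H :=
  exists_encoder_two_eps_K_minus_r_general X ε r hreg hdist
end

section
/- Let F_q be a finite field, let l ≥ 2 and ε ≥ 1 be integers with 2ε ≤ l, and let U ⊆ F_q^l be a subspace of dimension 2ε. For a tuple a = (a_1, …, a_{2ε}) ∈ F_q^{2ε}, let V(a) = {(p_0, …, p_{l−1}) ∈ F_q^l : Σ_{i=0}^{l−1} p_i a_j^i = 0 for all j ∈ {1, …, 2ε}} (the coefficient vectors of polynomials of degree less than l vanishing at each a_j). Then the number of tuples a ∈ F_q^{2ε} for which U ∩ V(a) ≠ {0} is at most ((q^{2ε} − 1)/(q − 1)) · (l − 1)^{2ε}. -/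
/-!
Every bad tuple `a` is a tuple of roots of the polynomial `p` of some nonzero `p ∈ U`, and
rescaling `p` changes neither its roots nor its point of `ℙ(U)`. So the bad tuples lie in the
union, over the `(q^{2ε} - 1)/(q - 1)` points of `ℙ(U)`, of the tuples of roots of a fixed
nonzero polynomial of degree `< l`, each of which has at most `(l - 1)^{2ε}` elements.
-/

open Matrix Finset

open Polynomial
open scoped LinearAlgebra.Projectivization

theorem Polynomial.eval_ofFn {R : Type*} [Semiring R] [DecidableEq R] {n : ℕ} (v : Fin n → R)
    (x : R) : (ofFn n v).eval x = ∑ i : Fin n, v i * x ^ (i : ℕ) := by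
  simp [ofFn_eq_sum_monomial, eval_finsetSum]

theorem Polynomial.card_roots_toFinset_ofFn_le {R : Type*} [CommRing R] [IsDomain R]
    [DecidableEq R] {n : ℕ} (v : Fin n → R) : (ofFn n v).roots.toFinset.card ≤ n - 1 := by
  refine (Multiset.toFinset_card_le _).trans ((card_roots' _).trans ?_)
  rcases n with _ | n
  · simp
  · exact Nat.le_sub_one_of_lt (ofFn_natDegree_lt n.succ_pos v)

theorem Projectivization.roots_map_rep {K V : Type*} [Field K] [AddCommGroup V] [Module K V]
    (f : V →ₗ[K] K[X]) {v : V} (hv : v ≠ 0) :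
    (f (Projectivization.mk K v hv).rep).roots = (f v).roots := by
  obtain ⟨c, hc⟩ := exists_smul_eq_mk_rep K v hv
  rw [← hc, Units.smul_def, map_smul, roots_smul_nonzero _ c.ne_zero]

theorem Set.ncard_setOf_exists_forall_mem_le {P ι α : Type*} [Finite P] [Fintype ι]
    (R : P → Finset α) {k : ℕ} (hR : ∀ x, (R x).card ≤ k) :
    {a : ι → α | ∃ x, ∀ j, a j ∈ R x}.ncard ≤ Nat.card P * k ^ Fintype.card ι := by
  classical
  have := Fintype.ofFinite P
  have hunion : {a : ι → α | ∃ x, ∀ j, a j ∈ R x} =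
      ↑(Finset.univ.biUnion fun x => Fintype.piFinset fun _ : ι => R x) := by
    ext a
    simp
  rw [hunion, Set.ncard_coe_finset, Nat.card_eq_fintype_card]
  calc _ ≤ ∑ x, (Fintype.piFinset fun _ : ι => R x).card := card_biUnion_le
    _ ≤ ∑ _x : P, k ^ Fintype.card ι := by
      gcongr with x
      rw [Fintype.card_piFinset]
      exact prod_le_pow_card _ _ _ fun _ _ => hR x
    _ = _ := by simp

theorem random_vandermonde_bound_general (F : Type) [Field F] [Fintype F] (l ε : ℕ)
    (U : Submodule F (Fin l → F)) (hU : Module.finrank F U = 2 * ε) :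
    {a : Fin (2 * ε) → F | ∃ p : Fin l → F, p ∈ U ∧
        (∀ j : Fin (2 * ε), ∑ i : Fin l, p i * (a j) ^ (i : ℕ) = 0) ∧ p ≠ 0}.ncard ≤
      (Fintype.card F ^ (2 * ε) - 1) / (Fintype.card F - 1) * (l - 1) ^ (2 * ε) := by
  classical
  let roots (x : ℙ F U) : Finset F := (ofFn l (x.rep : Fin l → F)).roots.toFinset
  have hbad : {a : Fin (2 * ε) → F | ∃ p : Fin l → F, p ∈ U ∧
      (∀ j : Fin (2 * ε), ∑ i : Fin l, p i * (a j) ^ (i : ℕ) = 0) ∧ p ≠ 0} ⊆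
      {a | ∃ x, ∀ j, a j ∈ roots x} := by
    rintro a ⟨p, hpU, hroots, hp⟩
    have hp' : (⟨p, hpU⟩ : U) ≠ 0 := by simpa using hp
    refine ⟨.mk F _ hp', fun j => ?_⟩
    have hroots_rep := Projectivization.roots_map_rep ((ofFn l).comp U.subtype) hp'
    simp only [LinearMap.comp_apply, Submodule.subtype_apply] at hroots_rep
    simp only [roots, Multiset.mem_toFinset, hroots_rep, mem_roots',
      map_ne_zero_iff _ (injective_ofFn l), IsRoot.def, eval_ofFn]
    exact ⟨hp, hroots j⟩
  have hcard : Nat.card (ℙ F U) = (Fintype.card F ^ (2 * ε) - 1) / (Fintype.card F - 1) := by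
    rw [Projectivization.card'', Nat.card_eq_fintype_card (α := U),
      Module.card_eq_pow_finrank (K := F), hU, Nat.card_eq_fintype_card]
  calc _ ≤ _ := Set.ncard_le_ncard hbad (Set.toFinite _)
    _ ≤ Nat.card (ℙ F U) * (l - 1) ^ Fintype.card (Fin (2 * ε)) :=
      Set.ncard_setOf_exists_forall_mem_le roots fun _ => card_roots_toFinset_ofFn_le _
    _ = _ := by rw [hcard, Fintype.card_fin]

/-- Let `U ⊆ F_q^l` be a subspace of dimension `2ε` and, for a tuple
`a ∈ F_q^{2ε}`, let `V(a)` be the space of coefficient vectors of polynomials of degree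
`< l` vanishing at each `a_j`. The number of tuples `a` with `U ∩ V(a) ≠ {0}` is at most
`((q^{2ε} − 1)/(q − 1)) · (l − 1)^{2ε}`. -/
theorem random_vandermonde_bound (F : Type) [Field F] [Fintype F] (l ε : ℕ)
    (hl : 2 ≤ l) (hε : 1 ≤ ε) (hεl : 2 * ε ≤ l)
    (U : Submodule F (Fin l → F)) (hU : Module.finrank F U = 2 * ε) :
    {a : Fin (2 * ε) → F | ∃ p : Fin l → F, p ∈ U ∧
        (∀ j : Fin (2 * ε), ∑ i : Fin l, p i * (a j) ^ (i : ℕ) = 0) ∧ p ≠ 0}.ncard ≤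
      (Fintype.card F ^ (2 * ε) - 1) / (Fintype.card F - 1) * (l - 1) ^ (2 * ε) :=
  random_vandermonde_bound_general F l ε U hU
end

section
/- Assume ε ≥ 1, 𝓚 is nonempty, |X_k| = Z for every k ∈ 𝓚, and every subfile index f ∈ 𝓕 belongs to X_k for at least one k ∈ 𝓚. Then ℓ*(X,ε) = F if and only if Z ≤ 2ε. -/
open Matrix Finset

/-! A node `k` can decode iff no kernel vector `v` of `H` that is nonzero on `X k` has at most
`2ε` nonzero entries there: on `X k` such a `v` is a difference `e - e'` of two admissible
updates that `k` cannot tell apart. If `Z ≤ 2ε` and the `X k` cover `𝓕`, this forces `H` to be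
injective, so `l ≥ F`. If `Z > 2ε`, every `H` whose kernel is the constant vectors is valid,
and `F - 1` rows suffice. -/

theorem Function.exists_factor_iff {α β γ : Type*} [Nonempty γ] (P : α → Prop) (φ : α → β)
    (ψ : α → γ) :
    (∃ D : β → γ, ∀ a, P a → D (φ a) = ψ a) ↔
      ∀ a b, P a → P b → φ a = φ b → ψ a = ψ b := by
  refine ⟨fun ⟨D, hD⟩ a b ha hb hab => by rw [← hD a ha, ← hD b hb, hab], fun h => ?_⟩
  have hfac : Function.FactorsThrough (fun a : Subtype P => ψ a) (fun a => φ a) :=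
    fun a b hab => h a b a.2 b.2 hab
  exact ⟨Function.extend (fun a : Subtype P => φ a) (fun a => ψ a) (Classical.arbitrary _),
    fun a ha => hfac.extend_apply _ ⟨a, ha⟩⟩

theorem Matrix.exists_mulVec_eq_zero_iff_mem {ι F : Type*} [Fintype ι] [Field F]
    (W : Submodule F (ι → F)) {l : ℕ} (hl : l + Module.finrank F W = Fintype.card ι) :
    ∃ H : Matrix (Fin l) ι F, ∀ v, H *ᵥ v = 0 ↔ v ∈ W := by
  classical
  have hQ : Module.finrank F ((ι → F) ⧸ W) = Module.finrank F (Fin l → F) := by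
    have := W.finrank_quotient_add_finrank
    rw [Module.finrank_fin_fun, Module.finrank_fintype_fun_eq_card] at *
    omega
  let e := LinearEquiv.ofFinrankEq _ _ hQ
  refine ⟨LinearMap.toMatrix' (e.toLinearMap ∘ₗ W.mkQ), fun v => ?_⟩
  rw [LinearMap.toMatrix'_mulVec, ← LinearMap.mem_ker, LinearEquiv.ker_comp, W.ker_mkQ]

theorem Set.ncard_support_indicator_le {α M : Type*} [Zero M] (s : Set α) (hs : s.Finite)
    (v : α → M) : {a | s.indicator v a ≠ 0}.ncard ≤ s.ncard :=
  Set.ncard_le_ncard Set.support_indicator_subset hs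

section CacheUpdate

variable {𝓕 𝓚 : Type} [Fintype 𝓕] {F : Type} [Field F] [Fintype F]
  (X : 𝓚 → Finset 𝓕) (ε : ℕ)

theorem validEncoder_iff_forall_eqOn {l : ℕ} (H : Matrix (Fin l) 𝓕 F) :
    ValidEncoder F X ε H ↔ ∀ k (w e w' e' : 𝓕 → F), {f | e f ≠ 0}.ncard ≤ ε →
      {f | e' f ≠ 0}.ncard ≤ ε → H *ᵥ (w + e) = H *ᵥ (w' + e') →
      (∀ f ∈ X k, w f = w' f) → ∀ f ∈ X k, (w + e) f = (w' + e') f := by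
  refine forall_congr' fun k => ⟨fun ⟨D, hD⟩ w e w' e' he he' hH hw f hf => ?_, fun h => ?_⟩
  · have hside : (fun f : {f // f ∈ X k} => w' f.1) = fun f => w f.1 :=
      funext fun f => (hw f f.2).symm
    have h' := hD w' e' he'
    rw [← hH, hside] at h'
    exact congrFun ((hD w e he).symm.trans h') ⟨f, hf⟩
  · obtain ⟨D, hD⟩ := (Function.exists_factor_iff
      (fun p : (𝓕 → F) × (𝓕 → F) => {f | p.2 f ≠ 0}.ncard ≤ ε)
      (fun p => (H *ᵥ (p.1 + p.2), fun f : {f // f ∈ X k} => p.1 f))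
      (fun p (f : {f // f ∈ X k}) => (p.1 + p.2) f)).2
      fun p q hp hq hpq => funext fun f =>
        h p.1 p.2 q.1 q.2 hp hq (congrArg Prod.fst hpq)
          (fun f hf => congrFun (congrArg Prod.snd hpq) ⟨f, hf⟩) f f.2
    exact ⟨Function.curry D, fun w e he => hD (w, e) he⟩

theorem validEncoder_iff_forall_mulVec_eq_zero {l : ℕ} (H : Matrix (Fin l) 𝓕 F) :
    ValidEncoder F X ε H ↔ ∀ k (v : 𝓕 → F), H *ᵥ v = 0 →
      {f | f ∈ X k ∧ v f ≠ 0}.ncard ≤ 2 * ε → ∀ f ∈ X k, v f = 0 := by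
  rw [validEncoder_iff_forall_eqOn]
  refine ⟨fun h k v hv hsmall => ?_, fun h k w e w' e' he he' hH hw f hf => ?_⟩
  · set S := {f | f ∈ X k ∧ v f ≠ 0}
    have hS : S.Finite := (X k).finite_toSet.subset fun f hf => hf.1
    obtain ⟨T, hTS, hT⟩ := Set.exists_subset_card_eq (min_le_right ε S.ncard)
    set a := T.indicator v
    set b := (S \ T).indicator v
    have hab : ∀ f ∈ X k, a f + b f = v f := by
      intro f hf
      have hsplit := congrFun
        (Set.indicator_union_of_disjoint (Set.disjoint_sdiff_right (s := T) (t := S)) v) f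
      rw [Set.union_sdiff_cancel hTS] at hsplit
      rw [← hsplit, Set.indicator_apply_eq_self]
      exact fun h => not_not.1 fun hv => h ⟨hf, hv⟩
    have ha : {f | a f ≠ 0}.ncard ≤ ε :=
      (Set.ncard_support_indicator_le T (hS.subset hTS) v).trans (hT ▸ min_le_left _ _)
    have hb : {f | (-b) f ≠ 0}.ncard ≤ ε := by
      simp only [Pi.neg_apply, neg_ne_zero]
      refine (Set.ncard_support_indicator_le _ hS.sdiff v).trans ?_
      rw [Set.ncard_sdiff hTS (hS.subset hTS)]
      omega
    intro f hf
    have := h k (v - b - a) a 0 (-b) ha hb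
      (by rw [sub_add_cancel, zero_add, Matrix.mulVec_sub, hv, zero_sub, Matrix.mulVec_neg])
      (fun f hf => by simp [← hab f hf]) f hf
    simp only [Pi.add_apply, Pi.sub_apply, Pi.neg_apply, Pi.zero_apply] at this
    linear_combination this
  · set v := (w + e) - (w' + e')
    have hv : H *ᵥ v = 0 := by rw [Matrix.mulVec_sub, hH, sub_self]
    have hsub : {f | f ∈ X k ∧ v f ≠ 0} ⊆ {f | e f ≠ 0} ∪ {f | e' f ≠ 0} := by
      rintro f ⟨hf, hvf⟩
      by_contra hne
      simp only [Set.mem_union, Set.mem_ofPred_eq, not_or, not_not] at hne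
      simp [v, hw f hf, hne.1, hne.2] at hvf
    have hsmall := (Set.ncard_le_ncard hsub (Set.toFinite _)).trans (Set.ncard_union_le _ _)
    exact sub_eq_zero.1 (h k v hv (by omega) f hf)

theorem eq_zero_of_validEncoder_of_mulVec_eq_zero (hX : ∀ k, (X k).card ≤ 2 * ε)
    (hcov : ∀ f, ∃ k, f ∈ X k) {l : ℕ} {H : Matrix (Fin l) 𝓕 F} (hH : ValidEncoder F X ε H)
    {v : 𝓕 → F} (hv : H *ᵥ v = 0) : v = 0 := by
  funext f
  obtain ⟨k, hf⟩ := hcov f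
  refine (validEncoder_iff_forall_mulVec_eq_zero X ε H).1 hH k v hv ?_ f hf
  calc {f | f ∈ X k ∧ v f ≠ 0}.ncard ≤ (X k : Set 𝓕).ncard :=
        Set.ncard_le_ncard (fun f hf => hf.1) (X k).finite_toSet
    _ = (X k).card := Set.ncard_coe_finset _
    _ ≤ 2 * ε := hX k

theorem card_le_of_validEncoder (hX : ∀ k, (X k).card ≤ 2 * ε) (hcov : ∀ f, ∃ k, f ∈ X k)
    {l : ℕ} {H : Matrix (Fin l) 𝓕 F} (hH : ValidEncoder F X ε H) : Fintype.card 𝓕 ≤ l := by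
  have hinj : Function.Injective H.mulVecLin := LinearMap.ker_eq_bot.1 <|
    Matrix.ker_mulVecLin_eq_bot_iff.2 fun _ =>
      eq_zero_of_validEncoder_of_mulVec_eq_zero X ε hX hcov hH
  simpa using LinearMap.finrank_le_finrank_of_injective hinj

theorem validEncoder_of_forall_mulVec_eq_zero_mem_span_one (hX : ∀ k, 2 * ε < (X k).card)
    {l : ℕ} (H : Matrix (Fin l) 𝓕 F) (hH : ∀ v, H *ᵥ v = 0 → v ∈ F ∙ (1 : 𝓕 → F)) :
    ValidEncoder F X ε H := by
  refine (validEncoder_iff_forall_mulVec_eq_zero X ε H).2 fun k v hv hsmall f hf => ?_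
  obtain ⟨c, rfl⟩ := Submodule.mem_span_singleton.1 (hH v hv)
  by_contra hc
  have hall : {f | f ∈ X k ∧ (c • (1 : 𝓕 → F)) f ≠ 0} = X k := by
    ext f
    simp_all
  rw [hall, Set.ncard_coe_finset] at hsmall
  exact (hX k).not_ge hsmall

theorem exists_validEncoder_card :
    ∃ H : Matrix (Fin (Fintype.card 𝓕)) 𝓕 F, ValidEncoder F X ε H := by
  obtain ⟨H, hH⟩ := Matrix.exists_mulVec_eq_zero_iff_mem (⊥ : Submodule F (𝓕 → F))
    (l := Fintype.card 𝓕) (by simp)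
  refine ⟨H, (validEncoder_iff_forall_mulVec_eq_zero X ε H).2 fun k v hv _ f _ => ?_⟩
  rw [(Submodule.mem_bot F).1 ((hH v).1 hv), Pi.zero_apply]

theorem exists_validEncoder_card_sub_one [Nonempty 𝓕] (hX : ∀ k, 2 * ε < (X k).card) :
    ∃ H : Matrix (Fin (Fintype.card 𝓕 - 1)) 𝓕 F, ValidEncoder F X ε H := by
  have hrank : Fintype.card 𝓕 - 1 + Module.finrank F (F ∙ (1 : 𝓕 → F)) = Fintype.card 𝓕 := by
    rw [finrank_span_singleton one_ne_zero]
    exact Nat.sub_add_cancel Fintype.card_pos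
  obtain ⟨H, hH⟩ := Matrix.exists_mulVec_eq_zero_iff_mem _ hrank
  exact ⟨H, validEncoder_of_forall_mulVec_eq_zero_mem_span_one X ε hX H fun v => (hH v).1⟩

theorem optLen_le {l : ℕ} {H : Matrix (Fin l) 𝓕 F} (hH : ValidEncoder F X ε H) :
    optLen X ε ≤ l :=
  Nat.sInf_le ⟨F, _, _, H, hH⟩

end CacheUpdate

section OptLen

variable {𝓕 𝓚 : Type} [Fintype 𝓕] (X : 𝓚 → Finset 𝓕) (ε : ℕ)

theorem optLen_le_card : optLen X ε ≤ Fintype.card 𝓕 :=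
  optLen_le X ε (exists_validEncoder_card (F := ZMod 2) X ε).choose_spec

theorem card_le_optLen (hX : ∀ k, (X k).card ≤ 2 * ε) (hcov : ∀ f, ∃ k, f ∈ X k) :
    Fintype.card 𝓕 ≤ optLen X ε := by
  obtain ⟨H, hH⟩ := exists_validEncoder_card (F := ZMod 2) X ε
  refine le_csInf ⟨_, ZMod 2, _, _, H, hH⟩ ?_
  rintro l ⟨F, _, _, H, hH⟩
  exact card_le_of_validEncoder X ε hX hcov hH

theorem optLen_lt_card [Nonempty 𝓕] (hX : ∀ k, 2 * ε < (X k).card) :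
    optLen X ε < Fintype.card 𝓕 :=
  (optLen_le X ε (exists_validEncoder_card_sub_one (F := ZMod 2) X ε hX).choose_spec).trans_lt
    (Nat.sub_lt Fintype.card_pos one_pos)

end OptLen

theorem optLen_eq_F_iff_general {𝓕 𝓚 : Type} [Fintype 𝓕] [Nonempty 𝓚] (X : 𝓚 → Finset 𝓕)
    (ε Z : ℕ) (hZ : ∀ k, (X k).card = Z)
    (hcov : ∀ f : 𝓕, ∃ k, f ∈ X k) :
    optLen X ε = Fintype.card 𝓕 ↔ Z ≤ 2 * ε := by
  refine ⟨fun h => ?_, fun h => (optLen_le_card X ε).antisymm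
    (card_le_optLen X ε (fun k => (hZ k).trans_le h) hcov)⟩
  by_contra! hlt
  obtain ⟨k⟩ := ‹Nonempty 𝓚›
  obtain ⟨f, -⟩ := Finset.card_pos.1 (hZ k ▸ Nat.zero_lt_of_lt hlt)
  have : Nonempty 𝓕 := ⟨f⟩
  exact (optLen_lt_card X ε fun k => hZ k ▸ hlt).ne h

/-- Assume `ε ≥ 1`, `𝓚` nonempty, `|X k| = Z` for every `k`, and every
subfile is cached at some node. Then `ℓ*(X, ε) = F` iff `Z ≤ 2ε`. -/
theorem optLen_eq_F_iff {𝓕 𝓚 : Type} [Fintype 𝓕] [Nonempty 𝓚] (X : 𝓚 → Finset 𝓕)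
    (ε Z : ℕ) (hε : 1 ≤ ε) (hZ : ∀ k, (X k).card = Z)
    (hcov : ∀ f : 𝓕, ∃ k, f ∈ X k) :
    optLen X ε = Fintype.card 𝓕 ↔ Z ≤ 2 * ε :=
  optLen_eq_F_iff_general X ε Z hZ hcov
end

section
/- Assume ε ≥ 1 and every subfile index f ∈ 𝓕 belongs to X_k for at least one k ∈ 𝓚. If H is a valid encoder over a finite field F_q for the (X,ε) cache update problem, then any two distinct columns of H are linearly independent (in particular every column is nonzero). -/
open Matrix Finset

/-!
A valid encoder lets node `k` recover `e|_{X_k}` from `H e` alone (take `w = 0`), so `H` is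
injective on updates of weight at most `ε` once the caches cover every subfile. A zero column
`f` would identify the updates `e_f` and `0`, and a relation `a c₁ + b c₂ = 0` between columns
identifies the weight-one updates `a e_{f₁}` and `-b e_{f₂}`, which forces `a = b = 0`.
-/

theorem Pi.ncard_support_single_le_one {ι M : Type} [DecidableEq ι] [Zero M] (i : ι) (a : M) :
    (Function.support (Pi.single i a)).ncard ≤ 1 :=
  (Set.ncard_le_ncard Pi.support_single_subset (Set.finite_singleton i)).trans_eq
    (Set.ncard_singleton i)

namespace ValidEncoder

variable {𝓕 𝓚 F : Type} [Fintype 𝓕] [Field F] [Fintype F] {X : 𝓚 → Finset 𝓕} {ε l : ℕ}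
  {H : Matrix (Fin l) 𝓕 F}

theorem apply_eq_of_mulVec_eq (hH : ValidEncoder F X ε H) {e₁ e₂ : 𝓕 → F}
    (h₁ : {f | e₁ f ≠ 0}.ncard ≤ ε) (h₂ : {f | e₂ f ≠ 0}.ncard ≤ ε) (he : H *ᵥ e₁ = H *ᵥ e₂)
    {k : 𝓚} {f : 𝓕} (hf : f ∈ X k) : e₁ f = e₂ f := by
  obtain ⟨D, hD⟩ := hH k
  have hdec := (hD 0 e₁ h₁).symm.trans (by simpa only [zero_add, he] using hD 0 e₂ h₂)
  simpa using congrFun hdec ⟨f, hf⟩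

theorem eq_of_mulVec_eq (hH : ValidEncoder F X ε H) (hcov : ∀ f : 𝓕, ∃ k, f ∈ X k)
    {e₁ e₂ : 𝓕 → F} (h₁ : {f | e₁ f ≠ 0}.ncard ≤ ε) (h₂ : {f | e₂ f ≠ 0}.ncard ≤ ε)
    (he : H *ᵥ e₁ = H *ᵥ e₂) : e₁ = e₂ :=
  funext fun f => (hcov f).elim fun _ hf => hH.apply_eq_of_mulVec_eq h₁ h₂ he hf

theorem single_eq_of_mulVec_eq [DecidableEq 𝓕] (hH : ValidEncoder F X ε H) (hε : 1 ≤ ε)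
    (hcov : ∀ f : 𝓕, ∃ k, f ∈ X k) {f₁ f₂ : 𝓕} {a b : F}
    (he : H *ᵥ Pi.single f₁ a = H *ᵥ Pi.single f₂ b) :
    (Pi.single f₁ a : 𝓕 → F) = Pi.single f₂ b :=
  hH.eq_of_mulVec_eq hcov ((Pi.ncard_support_single_le_one f₁ a).trans hε)
    ((Pi.ncard_support_single_le_one f₂ b).trans hε) he

end ValidEncoder

/-- Assume `ε ≥ 1` and every subfile is cached at some node. If `H` is a
valid encoder over a finite field for the `(X, ε)` cache update problem, then every
column of `H` is nonzero, and any two distinct columns are linearly independent. -/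
theorem validEncoder_two_columns {𝓕 𝓚 : Type} [Fintype 𝓕] (F : Type) [Field F]
    [Fintype F] (X : 𝓚 → Finset 𝓕) (ε : ℕ) (hε : 1 ≤ ε)
    (hcov : ∀ f : 𝓕, ∃ k, f ∈ X k) {l : ℕ} (H : Matrix (Fin l) 𝓕 F)
    (hH : ValidEncoder F X ε H) :
    (∀ f : 𝓕, (fun i => H i f) ≠ 0) ∧
      ∀ f₁ f₂ : 𝓕, f₁ ≠ f₂ →
        LinearIndependent F ![fun i => H i f₁, fun i => H i f₂] := by
  classical
  refine ⟨fun f hf => ?_, fun f₁ f₂ hne => LinearIndependent.pair_iff.mpr fun a b hab => ?_⟩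
  · have hcol : H *ᵥ Pi.single f 1 = H *ᵥ Pi.single f 0 := by
      ext i
      simpa using congrFun hf i
    exact one_ne_zero <|
      Pi.single_injective f (ValidEncoder.single_eq_of_mulVec_eq hH hε hcov hcol)
  · have hcol : H *ᵥ Pi.single f₁ a = H *ᵥ Pi.single f₂ (-b) := by
      ext i
      simpa [mul_comm, eq_neg_iff_add_eq_zero] using congrFun hab i
    have hsingle := ValidEncoder.single_eq_of_mulVec_eq hH hε hcov hcol
    have ha := congrFun hsingle f₁
    have hb := congrFun hsingle f₂
    simp only [Pi.single_eq_same, Pi.single_eq_of_ne hne, Pi.single_eq_of_ne hne.symm] at ha hb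
    exact ⟨ha, neg_eq_zero.mp hb.symm⟩
end

section
/- Let ε ≥ 1, let L ≤ K, and let π_1, …, π_L ∈ 𝓚 be pairwise distinct node indices. Then every valid encoder over any finite field for the (X,ε) cache update problem has at least Σ_{i=1}^{L} min{ 2ε, |X_{π_i} \ (X_{π_1} ∪ ⋯ ∪ X_{π_{i−1}})| } rows; consequently ℓ*(X,ε) is at least this sum. -/
open Matrix Finset

/-! If a kernel vector `d` of `H` has at most `2ε` nonzero coordinates in the cache `X k`, then
there it is the difference `e - e'` of two updates of weight at most `ε`, and the decoder of node
`k` cannot tell `(0, e)` from `(e - e' - d, e')`: so `d` vanishes on `X k`. Going through the nodes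
`π i` in order and keeping up to `2ε` coordinates of `X (π i)` not cached by earlier nodes,
induction shows that `H` is injective on vectors supported on the kept coordinates, so their
number is at most the number of rows. -/

lemma exists_sub_eq_of_support_subset {α F : Type} [AddGroup F] {v : α → F} {S : Finset α}
    {ε : ℕ} (hv : Function.support v ⊆ S) (hS : S.card ≤ 2 * ε) :
    ∃ e e' : α → F, v = e - e' ∧
      (Function.support e).ncard ≤ ε ∧ (Function.support e').ncard ≤ ε := by
  classical
  obtain ⟨S₁, hS₁S, hS₁⟩ := exists_subset_card_eq (min_le_right ε S.card)
  refine ⟨(S₁ : Set α).indicator v, -(S₁ : Set α)ᶜ.indicator v, ?_, ?_, ?_⟩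
  · rw [sub_neg_eq_add, Set.indicator_self_add_compl]
  · calc (Function.support ((S₁ : Set α).indicator v)).ncard ≤ (S₁ : Set α).ncard :=
          Set.ncard_le_ncard Set.support_indicator_subset S₁.finite_toSet
      _ ≤ ε := by rw [Set.ncard_coe_finset]; omega
  · have hsub : Function.support (-(S₁ : Set α)ᶜ.indicator v) ⊆ ↑(S \ S₁) := by
      rw [Function.support_neg, Set.support_indicator, coe_sdiff]
      exact fun f ⟨hf₁, hfv⟩ => ⟨hv hfv, hf₁⟩
    calc (Function.support (-(S₁ : Set α)ᶜ.indicator v)).ncard ≤ (↑(S \ S₁) : Set α).ncard :=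
          Set.ncard_le_ncard hsub (S \ S₁).finite_toSet
      _ ≤ ε := by rw [Set.ncard_coe_finset, card_sdiff_of_subset hS₁S]; omega

lemma Matrix.card_le_of_eq_zero_of_mulVec_eq_zero {α F : Type} [Fintype α] [Field F] {l : ℕ}
    {H : Matrix (Fin l) α F} {s : Finset α}
    (h : ∀ d : α → F, H *ᵥ d = 0 → Function.support d ⊆ s → d = 0) : s.card ≤ l := by
  classical
  have hcols : LinearIndepOn F H.col (s : Set α) := by
    rw [linearIndepOn_iff']
    intro t g hts hsum i hi
    let d : α → F := fun f => if f ∈ t then g f else 0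
    have hd : H *ᵥ d = 0 := by
      rw [← hsum]; ext r
      simp [d, mulVec, dotProduct, Finset.sum_apply, mul_comm]
    have hd_supp : Function.support d ⊆ s := fun f hf => hts (of_not_not fun h => hf (if_neg h))
    simpa [d, hi] using congrFun (h d hd hd_supp) i
  simpa using hcols.fintype_card_le_finrank

namespace ValidEncoder

variable {𝓕 𝓚 F : Type} [Fintype 𝓕] [Field F] [Fintype F] {X : 𝓚 → Finset 𝓕} {ε l : ℕ}
  {H : Matrix (Fin l) 𝓕 F}

lemma eqOn_of_mulVec_add_eq (hH : ValidEncoder F X ε H) (k : 𝓚) {w e w' e' : 𝓕 → F}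
    (he : (Function.support e).ncard ≤ ε) (he' : (Function.support e').ncard ≤ ε)
    (hcode : H *ᵥ (w + e) = H *ᵥ (w' + e')) (hside : ∀ f ∈ X k, w f = w' f) :
    ∀ f ∈ X k, (w + e) f = (w' + e') f := by
  obtain ⟨D, hD⟩ := hH k
  have hside' : (fun f : {f // f ∈ X k} => w f.1) = fun f => w' f.1 :=
    funext fun f => hside f.1 f.2
  have hdecode := (hD w e he).symm.trans (hcode ▸ hside' ▸ hD w' e' he')
  exact fun f hf => congrFun hdecode ⟨f, hf⟩

lemma eqOn_zero_of_mulVec_eq_zero_s12 (hH : ValidEncoder F X ε H) (k : 𝓚) {d : 𝓕 → F}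
    (hd : H *ᵥ d = 0) {S : Finset 𝓕} (hS : S.card ≤ 2 * ε) (hdS : ∀ f ∈ X k, f ∉ S → d f = 0) :
    ∀ f ∈ X k, d f = 0 := by
  have hsupp : Function.support ((X k : Set 𝓕).indicator d) ⊆ S := by
    rw [Set.support_indicator]
    exact fun f ⟨hfX, hdf⟩ => of_not_not fun hfS => hdf (hdS f hfX hfS)
  obtain ⟨e, e', hee', he, he'⟩ := exists_sub_eq_of_support_subset hsupp hS
  have hsum : (e - e' - d) + e' = e - d := by abel
  have hcode : H *ᵥ (0 + e) = H *ᵥ ((e - e' - d) + e') := by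
    rw [hsum, zero_add, mulVec_sub, hd, sub_zero]
  have hside : ∀ f ∈ X k, (0 : 𝓕 → F) f = (e - e' - d) f := by
    intro f hf
    have hdf := congrFun hee' f
    rw [Set.indicator_of_mem (mem_coe.mpr hf)] at hdf
    simp [hdf]
  intro f hf
  have hef := eqOn_of_mulVec_add_eq hH k he he' hcode hside f hf
  rw [hsum, zero_add, Pi.sub_apply] at hef
  exact sub_eq_self.mp hef.symm

lemma eq_zero_of_mulVec_eq_zero {ι : Type} [LinearOrder ι] [WellFoundedLT ι]
    (hH : ValidEncoder F X ε H) (π : ι → 𝓚) {T : ι → Finset 𝓕} (hTX : ∀ i, T i ⊆ X (π i))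
    (hT_new : ∀ i j, i < j → Disjoint (T j) (X (π i))) (hT_card : ∀ i, (T i).card ≤ 2 * ε)
    {d : 𝓕 → F} (hd : H *ᵥ d = 0) (hd_supp : ∀ f, d f ≠ 0 → ∃ i, f ∈ T i) : d = 0 := by
  have hdX : ∀ i, ∀ f ∈ X (π i), d f = 0 := by
    intro i
    induction i using WellFoundedLT.induction with
    | _ i ih =>
      refine hH.eqOn_zero_of_mulVec_eq_zero_s12 (π i) hd (hT_card i) fun f hfX hfT => ?_
      by_contra hdf
      obtain ⟨j, hfj⟩ := hd_supp f hdf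
      rcases lt_trichotomy j i with hji | rfl | hij
      · exact hdf (ih j hji f (hTX j hfj))
      · exact hfT hfj
      · exact disjoint_left.mp (hT_new i j hij) hfj hfX
  funext f
  by_contra hdf
  obtain ⟨i, hfi⟩ := hd_supp f hdf
  exact hdf (hdX i f (hTX i hfi))

theorem sum_min_card_sdiff_le [DecidableEq 𝓕] {ι : Type} [Fintype ι] [LinearOrder ι]
    [LocallyFiniteOrderBot ι] (hH : ValidEncoder F X ε H) (π : ι → 𝓚) :
    ∑ i, min (2 * ε) ((X (π i) \ (Iio i).biUnion (fun j => X (π j))).card) ≤ l := by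
  set A : ι → Finset 𝓕 := fun i => X (π i) \ (Iio i).biUnion (fun j => X (π j))
  choose T hTA hT_card using fun i => exists_subset_card_eq (min_le_right (2 * ε) (A i).card)
  have hTX : ∀ i, T i ⊆ X (π i) := fun i => (hTA i).trans sdiff_subset
  have hT_new : ∀ i j, i < j → Disjoint (T j) (X (π i)) := fun i j hij =>
    disjoint_of_subset_left (hTA j) <| disjoint_sdiff_self_left.mono_right <|
      subset_biUnion_of_mem (fun j => X (π j)) (mem_Iio.mpr hij)
  have hT_disj : ((univ : Finset ι) : Set ι).PairwiseDisjoint T := fun i _ j _ hij =>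
    hij.lt_or_gt.elim (fun h => ((hT_new i j h).mono_right (hTX i)).symm)
      (fun h => (hT_new j i h).mono_right (hTX j))
  calc ∑ i, min (2 * ε) (A i).card = (univ.biUnion T).card := by
        rw [card_biUnion hT_disj]; exact (sum_congr rfl fun i _ => hT_card i).symm
    _ ≤ l := by
      refine card_le_of_eq_zero_of_mulVec_eq_zero fun d hd hd_supp =>
        hH.eq_zero_of_mulVec_eq_zero π hTX hT_new (fun i => (hT_card i).trans_le (min_le_left _ _))
          hd fun f hf => ?_
      simpa using hd_supp hf

lemma of_mulVec_injective (h : Function.Injective H.mulVec) : ValidEncoder F X ε H :=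
  fun _ => ⟨fun c _ f => Function.invFun H.mulVec c f, fun w e _ =>
    funext fun f => congrFun (Function.leftInverse_invFun h (w + e)) f.1⟩

end ValidEncoder

lemma le_optLen {𝓕 𝓚 : Type} [Fintype 𝓕] {X : 𝓚 → Finset 𝓕} {ε n : ℕ}
    (h : ∀ (F : Type) [Field F] [Fintype F] (l : ℕ) (H : Matrix (Fin l) 𝓕 F),
      ValidEncoder F X ε H → n ≤ l) :
    n ≤ optLen X ε := by
  classical
  let e := Fintype.equivFin 𝓕
  have hid :
      Function.Injective ((1 : Matrix 𝓕 𝓕 (ZMod 2)).submatrix e.symm (Equiv.refl 𝓕)).mulVec :=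
    fun v w hvw => by
      rw [submatrix_mulVec_equiv, submatrix_mulVec_equiv, one_mulVec, one_mulVec] at hvw
      exact e.symm.surjective.injective_comp_right hvw
  refine le_csInf ⟨_, _, _, _, _, ValidEncoder.of_mulVec_injective hid⟩ ?_
  rintro l ⟨F, _, _, H, hH⟩
  exact h F l H hH

theorem generic_lower_bound_general {𝓕 𝓚 : Type} [Fintype 𝓕] [DecidableEq 𝓕]
    (X : 𝓚 → Finset 𝓕) (ε : ℕ) (L : ℕ)
    (π : Fin L → 𝓚) :
    (∀ (F : Type) (inst1 : Field F) (inst2 : Fintype F) (l : ℕ)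
        (H : Matrix (Fin l) 𝓕 F), @ValidEncoder 𝓕 𝓚 _ F inst1 inst2 X ε l H →
        ∑ i : Fin L,
          min (2 * ε) ((X (π i) \ (Finset.Iio i).biUnion (fun j => X (π j))).card) ≤ l) ∧
      ∑ i : Fin L,
          min (2 * ε) ((X (π i) \ (Finset.Iio i).biUnion (fun j => X (π j))).card) ≤
        optLen X ε := by
  have hbound := fun F (_ : Field F) (_ : Fintype F) l (H : Matrix (Fin l) 𝓕 F)
    (hH : ValidEncoder F X ε H) => hH.sum_min_card_sdiff_le π
  exact ⟨hbound, le_optLen hbound⟩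

/-- Let `ε ≥ 1`, `L ≤ K` and let `π₁, …, π_L` be pairwise distinct node
indices. Every valid encoder (over any finite field) has at least
`∑_{i=1}^{L} min{2ε, |X_{π_i} \ (X_{π_1} ∪ ⋯ ∪ X_{π_{i−1}})|}` rows; consequently
`ℓ*(X, ε)` is at least this sum. -/
theorem generic_lower_bound {𝓕 𝓚 : Type} [Fintype 𝓕] [DecidableEq 𝓕] [Fintype 𝓚]
    (X : 𝓚 → Finset 𝓕) (ε : ℕ) (hε : 1 ≤ ε) (L : ℕ) (hL : L ≤ Fintype.card 𝓚)
    (π : Fin L → 𝓚) (hπ : Function.Injective π) :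
    (∀ (F : Type) (inst1 : Field F) (inst2 : Fintype F) (l : ℕ)
        (H : Matrix (Fin l) 𝓕 F), @ValidEncoder 𝓕 𝓚 _ F inst1 inst2 X ε l H →
        ∑ i : Fin L,
          min (2 * ε) ((X (π i) \ (Finset.Iio i).biUnion (fun j => X (π j))).card) ≤ l) ∧
      ∑ i : Fin L,
          min (2 * ε) ((X (π i) \ (Finset.Iio i).biUnion (fun j => X (π j))).card) ≤
        optLen X ε :=
  generic_lower_bound_general X ε L π
end
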